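/- Let r^M denote the common rate value of the equalized solution with uniform weights and M levels. Then for every N ∈ ℕ with 2^N ≥ 3, r^{2^{N+1}−1} ≥ (1/5)·r^{2^N}. -/

import Mathlib

/-- The pairwise large-deviations rate
`r_{g,h}(p,q) = -(g+h)·log[(1-p)^{g/(g+h)}·(1-q)^{h/(g+h)} + p^{g/(g+h)}·q^{h/(g+h)}]`. -/
noncomputable def pairRate (g h p q : ℝ) : ℝ :=
  -(g + h) *
    Real.log ((1 - p) ^ (g / (g + h)) * (1 - q) ^ (h / (g + h))
      + p ^ (g / (g + h)) * q ^ (h / (g + h)))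

/-- The `i`-th rate (for `1 ≤ i ≤ M-1`) of a level vector `t` with weights `g`:
`r₁ = -g₁·log(1-t₁)`, `rᵢ = r_{g_{i-1},g_i}(t_{i-1},t_i)` for `2 ≤ i ≤ M-2`, and
`r_{M-1} = -g_{M-2}·log(t_{M-2})`. -/
noncomputable def rateAt (M : ℕ) (g t : ℕ → ℝ) (i : ℕ) : ℝ :=
  if i = 1 then -(g 1) * Real.log (1 - t 1)
  else if i = M - 1 then -(g (M - 2)) * Real.log (t (M - 2))
  else pairRate (g (i - 1)) (g i) (t (i - 1)) (t i)

/-- `t` is an equalized solution with `M` levels for the weights `g`, with common rate `r`: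
`t₀ = 0 < t₁ < ⋯ < t_{M-2} < 1 = t_{M-1}` and all of the `M-1` rates equal `r`. -/
def IsEqualizedWithRate (M : ℕ) (g t : ℕ → ℝ) (r : ℝ) : Prop :=
  t 0 = 0 ∧ t (M - 1) = 1 ∧ (∀ i, i < M - 1 → t i < t (i + 1)) ∧
    ∀ i, 1 ≤ i → i ≤ M - 1 → rateAt M g t i = r

/-- `t` is an equalized solution with `M` levels for the weights `g`. -/
def IsEqualizedSol (M : ℕ) (g t : ℕ → ℝ) : Prop :=
  ∃ r, IsEqualizedWithRate M g t r

/-!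
Substituting `tᵢ = sin² θᵢ` with `θᵢ ∈ [0, π/2]` turns every uniform rate into
`-2 log cos (θᵢ₊₁ - θᵢ)` (the boundary rates are the cases `θ₀ = 0`, `θ_{M-1} = π/2`).
Equal rates therefore mean equal angular steps, which telescope to `π/2`, so
`exp (-r^M / 2) = cos (π / (2(M-1)))`. Passing from `M = 2^N` to `2^{N+1} - 1` levels halves
the step `2x` to `x ≤ π/8`, and the claim becomes `cos x ^ 5 ≤ cos 2x` for small `x`.
-/

open Real

lemma pairRate_one_one (p q : ℝ) :
    pairRate 1 1 p q = -2 * log (√(1 - p) * √(1 - q) + √p * √q) := by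
  norm_num [pairRate, sqrt_eq_rpow]

lemma sin_arcsin_sqrt {x : ℝ} (hx : x ∈ Set.Icc 0 1) : sin (arcsin √x) = √x :=
  sin_arcsin (by linarith [sqrt_nonneg x]) (sqrt_le_one.2 hx.2)

lemma cos_arcsin_sqrt_sub_arcsin_sqrt {p q : ℝ} (hp : p ∈ Set.Icc 0 1)
    (hq : q ∈ Set.Icc 0 1) :
    cos (arcsin √q - arcsin √p) = √(1 - p) * √(1 - q) + √p * √q := by
  rw [cos_sub, cos_arcsin, cos_arcsin, sin_arcsin_sqrt hp, sin_arcsin_sqrt hq,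
    sq_sqrt hp.1, sq_sqrt hq.1]
  ring

lemma sqrt_mul_sqrt_add_sqrt_mul_sqrt_pos {p q : ℝ} (hpq : p ≤ q) (h : 0 < p ∨ q < 1) :
    0 < √(1 - p) * √(1 - q) + √p * √q := by
  rcases h with hp | hq
  · have : 0 < √p * √q := by have := hp.trans_le hpq; positivity
    positivity
  · have : 0 < √(1 - p) * √(1 - q) := by
      have := sub_pos.2 hq; have := sub_pos.2 (hpq.trans_lt hq); positivity
    positivity

lemma rateAt_one_eq_pairRate {M i : ℕ} {t : ℕ → ℝ} (h0 : t 0 = 0) (hM : t (M - 1) = 1)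
    (ht1 : t 1 ≤ 1) (htM : 0 ≤ t (M - 2)) :
    rateAt M (fun _ => 1) t i = pairRate 1 1 (t (i - 1)) (t i) := by
  unfold rateAt
  split_ifs with h1 h2
  · subst h1
    rw [pairRate_one_one, h0]
    simp only [sub_zero, sqrt_one, sqrt_zero, one_mul, zero_mul, add_zero,
      log_sqrt (sub_nonneg.2 ht1)]
    ring
  · subst h2
    rw [pairRate_one_one, hM, show M - 1 - 1 = M - 2 by omega]
    simp only [sub_self, sqrt_zero, sqrt_one, mul_zero, mul_one, zero_add, log_sqrt htM]
    ring
  · rfl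

lemma cos_eq_cos_div_of_forall_cos_sub_eq {θ : ℕ → ℝ} {n : ℕ} {L c : ℝ} (hn : 0 < n)
    (hθ : θ n - θ 0 = L) (hstep : ∀ i < n, θ (i + 1) - θ i ∈ Set.Icc 0 π)
    (hcos : ∀ i < n, cos (θ (i + 1) - θ i) = c) :
    c = cos (L / n) := by
  have hstep_eq : ∀ i < n, θ (i + 1) - θ i = arccos c := fun i hi => by
    rw [← hcos i hi, arccos_cos (hstep i hi).1 (hstep i hi).2]
  have hsum : θ n - θ 0 = n * arccos c := by
    rw [← Finset.sum_range_sub,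
      Finset.sum_congr rfl fun i hi => hstep_eq i (Finset.mem_range.1 hi)]
    simp
  have hc : c ∈ Set.Icc (-1) 1 := hcos 0 hn ▸ ⟨neg_one_le_cos _, cos_le_one _⟩
  rw [← hθ, hsum, mul_div_cancel_left₀ _ (by positivity), cos_arccos hc.1 hc.2]

namespace IsEqualizedWithRate

variable {M : ℕ} {g t : ℕ → ℝ} {r : ℝ}

lemma strictMonoOn (h : IsEqualizedWithRate M g t r) : StrictMonoOn t (Set.Iic (M - 1)) :=
  strictMonoOn_Iic_of_lt_succ fun m hm => by simpa [Order.succ_eq_add_one] using h.2.2.1 m hm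

lemma mem_Icc (h : IsEqualizedWithRate M g t r) {j : ℕ} (hj : j ≤ M - 1) :
    t j ∈ Set.Icc 0 1 := by
  have hmono := h.strictMonoOn.monotoneOn
  rw [← h.1, ← h.2.1]
  exact ⟨hmono (Nat.zero_le _) hj (Nat.zero_le j), hmono hj (Set.mem_Iic.2 le_rfl) hj⟩

lemma cos_angle_step_eq (h : IsEqualizedWithRate M (fun _ => 1) t r) (hM : 3 ≤ M) {i : ℕ}
    (hi : i < M - 1) : cos (arcsin √(t (i + 1)) - arcsin √(t i)) = exp (-(r / 2)) := by
  have hinner : 0 < t i ∨ t (i + 1) < 1 := by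
    rcases Nat.eq_zero_or_pos i with rfl | hi0
    · right
      rw [← h.2.1]
      exact h.strictMonoOn (show 1 ≤ M - 1 by omega) (Set.mem_Iic.2 le_rfl) (by omega)
    · left
      rw [← h.1]
      exact h.strictMonoOn (Nat.zero_le _) hi.le hi0
  have hpos := sqrt_mul_sqrt_add_sqrt_mul_sqrt_pos
    (h.strictMonoOn.monotoneOn hi.le hi (Nat.le_succ i)) hinner
  have hr : -2 * log (√(1 - t i) * √(1 - t (i + 1)) + √(t i) * √(t (i + 1))) = r := by
    rw [← pairRate_one_one, ← h.2.2.2 (i + 1) (by omega) hi,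
      rateAt_one_eq_pairRate h.1 h.2.1 (h.mem_Icc (by omega)).2 (h.mem_Icc (by omega)).1]
    rfl
  rw [cos_arcsin_sqrt_sub_arcsin_sqrt (h.mem_Icc hi.le) (h.mem_Icc hi), ← hr,
    show -(-2 * log _ / 2) = log _ by ring, exp_log hpos]

theorem exp_neg_half_rate (h : IsEqualizedWithRate M (fun _ => 1) t r) (hM : 3 ≤ M) :
    exp (-(r / 2)) = cos (π / 2 / (M - 1 : ℕ)) := by
  refine cos_eq_cos_div_of_forall_cos_sub_eq (θ := fun j => arcsin √(t j)) (by omega) ?_ ?_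
    fun i hi => h.cos_angle_step_eq hM hi
  · simp [h.1, h.2.1]
  · intro i hi
    have hle : arcsin √(t i) ≤ arcsin √(t (i + 1)) :=
      monotone_arcsin (sqrt_le_sqrt (h.strictMonoOn.monotoneOn hi.le hi (Nat.le_succ i)))
    constructor
    · linarith
    · linarith [arcsin_le_pi_div_two √(t (i + 1)), arcsin_nonneg.2 (sqrt_nonneg (t i)), pi_pos]

end IsEqualizedWithRate

lemma pow_five_le_two_mul_sq_sub_one {c : ℝ} (hc : 0.86 ≤ c) (hc1 : c ≤ 1) :
    c ^ 5 ≤ 2 * c ^ 2 - 1 := by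
  have hd := sub_nonneg.2 hc
  -- `2c² - 1 - c⁵ = (1 - c)(c⁴ + c³ + c² - c - 1)`
  have hg : 0 ≤ c ^ 4 + c ^ 3 + c ^ 2 - c - 1 := by
    nlinarith [mul_nonneg hd hd, mul_nonneg (mul_nonneg hd hd) hd]
  nlinarith [mul_nonneg (sub_nonneg.2 hc1) hg]

lemma cos_pow_five_le_cos_two_mul {x : ℝ} (hx : |x| ≤ π / 6) : cos x ^ 5 ≤ cos (2 * x) := by
  have hc : 0.86 ≤ cos x := by
    have hsq : x ^ 2 ≤ (π / 6) ^ 2 := sq_le_sq' (abs_le.1 hx).1 (abs_le.1 hx).2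
    nlinarith [one_sub_sq_div_two_le_cos (x := x), pi_lt_d2, pi_pos]
  rw [cos_two_mul]
  exact pow_five_le_two_mul_sq_sub_one hc (cos_le_one x)

/-- **The optimal rate does not decay too fast under doubling.**
For uniform weights, `r^{2^{N+1}-1} ≥ (1/5)·r^{2^N}` whenever `2^N ≥ 3`. -/
theorem equalized_rate_doubling_lower_bound
    (N : ℕ) (hN : 3 ≤ 2 ^ N) (t t' : ℕ → ℝ) (r r' : ℝ)
    (h : IsEqualizedWithRate (2 ^ N) (fun _ => (1 : ℝ)) t r)
    (h' : IsEqualizedWithRate (2 ^ (N + 1) - 1) (fun _ => (1 : ℝ)) t' r') :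
    (1 / 5) * r ≤ r' := by
  have hsteps : 2 ^ (N + 1) - 1 - 1 = 2 * (2 ^ N - 1) := by rw [pow_succ]; omega
  have hk : (2 : ℝ) ≤ (2 ^ N - 1 : ℕ) := by exact_mod_cast (by omega : 2 ≤ 2 ^ N - 1)
  have e : exp (-(r / 2)) = cos (2 * (π / 2 / (2 * (2 ^ N - 1 : ℕ)))) := by
    rw [h.exp_neg_half_rate hN]; congr 1; field_simp
  have e' : exp (-(r' / 2)) = cos (π / 2 / (2 * (2 ^ N - 1 : ℕ))) := by
    rw [h'.exp_neg_half_rate (by rw [pow_succ]; omega), hsteps, Nat.cast_mul, Nat.cast_two]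
  have hx : |π / 2 / (2 * (2 ^ N - 1 : ℕ))| ≤ π / 6 := by
    rw [abs_of_nonneg (by positivity), div_le_iff₀ (by positivity)]
    nlinarith [pi_pos]
  have hpow : exp (-(r' / 2)) ^ 5 ≤ exp (-(r / 2)) := e ▸ e' ▸ cos_pow_five_le_cos_two_mul hx
  rw [← exp_nat_mul, exp_le_exp] at hpow
  push_cast at hpow
  linarith
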